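/- arXiv:1812.09458 — 4 statements merged into one kernel-verified Lean document; each statement's English description precedes it below -/
import Mathlib

section
/- In any tournament, if vertex j beats vertex i (i.e., i ∈ N⁺(j)) and the score of i is at least 2 less than the score of j, then either one can reverse the arc j→i, or there exists a vertex u in N⁺(j) with j→u and u→i, so that reversing the arcs of the path (j,u,i) yields a tournament in which the score of i increases by 1, the score of j decreases by 1, and all other scores are unchanged. -/
def IsTournament {n : ℕ} (r : Fin n → Fin n → Prop) : Prop :=
  (∀ i, ¬ r i i) ∧ ∀ i j : Fin n, i ≠ j → (r i j ↔ ¬ r j i)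

noncomputable def score {n : ℕ} (r : Fin n → Fin n → Prop) (v : Fin n) : ℕ :=
  Nat.card {j : Fin n // r v j}

theorem stmt6 {n : ℕ} (r : Fin n → Fin n → Prop) (hT : IsTournament r)
    (i j : Fin n) (hji : r j i) (hs : score r i + 2 ≤ score r j) :
    ∃ u : Fin n, r j u ∧ r u i ∧
      ∀ r' : Fin n → Fin n → Prop,
        (∀ x y, r' x y ↔
          ((¬ ((x = j ∧ y = u) ∨ (x = u ∧ y = i)) ∧ r x y)
            ∨ (x = u ∧ y = j) ∨ (x = i ∧ y = u))) →
        (IsTournament r' ∧ score r' i = score r i + 1 ∧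
          score r j = score r' j + 1 ∧
          ∀ x : Fin n, x ≠ i → x ≠ j → score r' x = score r x) := by
  classical
  obtain ⟨hirr, hcomp⟩ := hT
  have hscore : ∀ (s : Fin n → Fin n → Prop) (v : Fin n),
      score s v = Set.ncard {w | s v w} := fun s v => Nat.card_coe_set_eq _
  have hij : i ≠ j := by rintro rfl; exact hirr _ hji
  -- find u
  have hu : ∃ u, r j u ∧ r u i := by
    by_contra h
    push_neg at h
    have hsub : {w | r j w} \ {i} ⊆ {w | r i w} := by
      rintro w ⟨hw, hwi⟩
      simp only [Set.mem_singleton_iff] at hwi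
      exact (hcomp i w (fun e => hwi e.symm)).mpr (h w hw)
    have h1 : Set.ncard ({w | r j w} \ {i}) + 1 = Set.ncard {w | r j w} :=
      Set.ncard_diff_singleton_add_one hji (Set.toFinite _)
    have h2 : Set.ncard ({w | r j w} \ {i}) ≤ Set.ncard {w | r i w} :=
      Set.ncard_le_ncard hsub (Set.toFinite _)
    rw [hscore r i, hscore r j] at hs
    omega
  obtain ⟨u, hju, hui⟩ := hu
  have hui' : u ≠ i := by rintro rfl; exact hirr _ hui
  have hju' : j ≠ u := by rintro rfl; exact hirr _ hju
  have hiu : ¬ r i u := (hcomp u i hui').mp hui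
  have huj : ¬ r u j := (hcomp j u hju').mp hju
  refine ⟨u, hju, hui, ?_⟩
  intro r' hr'
  have hi' : {w | r' i w} = insert u {w | r i w} := by
    ext w
    simp only [Set.mem_setOf_eq, Set.mem_insert_iff, hr']
    constructor
    · rintro (⟨-, h⟩ | ⟨h1, -⟩ | ⟨-, rfl⟩)
      · exact Or.inr h
      · exact absurd h1.symm hui'
      · exact Or.inl rfl
    · rintro (rfl | h)
      · exact Or.inr (Or.inr ⟨by trivial, by trivial⟩)
      · refine Or.inl ⟨?_, h⟩
        rintro (⟨h1, -⟩ | ⟨h1, -⟩)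
        · exact hij h1
        · exact hui' h1.symm
  have hj' : {w | r' j w} = {w | r j w} \ {u} := by
    ext w
    simp only [Set.mem_setOf_eq, Set.mem_diff, Set.mem_singleton_iff, hr']
    constructor
    · rintro (⟨hn, h⟩ | ⟨h1, -⟩ | ⟨h1, -⟩)
      · exact ⟨h, fun e => hn (Or.inl ⟨by trivial, e⟩)⟩
      · exact absurd h1 hju'
      · exact absurd h1.symm hij
    · rintro ⟨h, hw⟩
      refine Or.inl ⟨?_, h⟩
      rintro (⟨-, h2⟩ | ⟨h2, -⟩)
      · exact hw h2
      · exact hju' h2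
  have hu' : {w | r' u w} = insert j ({w | r u w} \ {i}) := by
    ext w
    simp only [Set.mem_setOf_eq, Set.mem_insert_iff, Set.mem_diff,
      Set.mem_singleton_iff, hr']
    constructor
    · rintro (⟨hn, h⟩ | ⟨-, rfl⟩ | ⟨h1, -⟩)
      · exact Or.inr ⟨h, fun e => hn (Or.inr ⟨by trivial, e⟩)⟩
      · exact Or.inl rfl
      · exact absurd h1 hui'
    · rintro (rfl | ⟨h, hw⟩)
      · exact Or.inr (Or.inl ⟨by trivial, by trivial⟩)
      · refine Or.inl ⟨?_, h⟩
        rintro (⟨h2, -⟩ | ⟨-, h2⟩)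
        · exact hju' h2.symm
        · exact hw h2
  have hasym : ∀ x y, x ≠ y → r' x y → ¬ r' y x := by
    intro x y hxy h1 h2
    rw [hr'] at h1 h2
    rcases h1 with ⟨nA, rxy⟩ | ⟨rfl, rfl⟩ | ⟨rfl, rfl⟩
    · rcases h2 with ⟨nA', ryx⟩ | ⟨rfl, rfl⟩ | ⟨rfl, rfl⟩
      · exact (hcomp x y hxy).mp rxy ryx
      · exact nA (Or.inl ⟨rfl, rfl⟩)
      · exact nA (Or.inr ⟨rfl, rfl⟩)
    · rcases h2 with ⟨nA', ryx⟩ | ⟨h3, h4⟩ | ⟨h3, h4⟩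
      · exact nA' (Or.inl ⟨rfl, rfl⟩)
      · exact hju' h3
      · exact hij h3.symm
    · rcases h2 with ⟨nA', ryx⟩ | ⟨h3, h4⟩ | ⟨h3, h4⟩
      · exact nA' (Or.inr ⟨rfl, rfl⟩)
      · exact hij h4
      · exact hui' h3
  have key : ∀ x y, r x y → r' x y ∨ r' y x := by
    intro x y h
    by_cases hc : (x = j ∧ y = u) ∨ (x = u ∧ y = i)
    · rcases hc with ⟨rfl, rfl⟩ | ⟨rfl, rfl⟩
      · exact Or.inr ((hr' _ _).mpr (Or.inr (Or.inl ⟨rfl, rfl⟩)))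
      · exact Or.inr ((hr' _ _).mpr (Or.inr (Or.inr ⟨rfl, rfl⟩)))
    · exact Or.inl ((hr' _ _).mpr (Or.inl ⟨hc, h⟩))
  have hT' : IsTournament r' := by
    constructor
    · intro x hx
      rw [hr'] at hx
      rcases hx with ⟨-, h⟩ | ⟨rfl, h⟩ | ⟨rfl, h⟩
      · exact hirr x h
      · exact hju' h.symm
      · exact hui' h.symm
    · intro x y hxy
      refine ⟨hasym x y hxy, fun hn => ?_⟩
      have : r x y ∨ r y x := by
        by_cases h : r x y
        · exact Or.inl h
        · exact Or.inr ((hcomp y x (Ne.symm hxy)).mpr h)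
      rcases this with h | h
      · rcases key x y h with h' | h'
        · exact h'
        · exact absurd h' hn
      · rcases key y x h with h' | h'
        · exact absurd h' hn
        · exact h'
  refine ⟨hT', ?_, ?_, ?_⟩
  · rw [hscore, hscore, hi', Set.ncard_insert_of_notMem (s := {w | r i w}) hiu (Set.toFinite _)]
  · rw [hscore, hscore, hj',
      Set.ncard_diff_singleton_add_one (s := {w | r j w}) hju (Set.toFinite _)]
  · intro x hxi hxj
    by_cases hxu : x = u
    · subst hxu
      rw [hscore, hscore, hu',
        Set.ncard_insert_of_notMem (s := {w | r x w} \ {i}) (by simp [huj]) (Set.toFinite _),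
        Set.ncard_diff_singleton_add_one (s := {w | r x w}) hui (Set.toFinite _)]
    · have hset : {w | r' x w} = {w | r x w} := by
        ext w
        simp only [Set.mem_setOf_eq, hr']
        constructor
        · rintro (⟨-, h⟩ | ⟨h1, -⟩ | ⟨h1, -⟩)
          · exact h
          · exact absurd h1 hxu
          · exact absurd h1 hxi
        · intro h
          refine Or.inl ⟨?_, h⟩
          rintro (⟨h1, -⟩ | ⟨h1, -⟩)
          · exact hxj h1
          · exact hxu h1
      rw [hscore, hscore, hset]
end

section
/- For n odd, the number of distinct values of the sum of squares of scores over all n-tournaments is (1/4)·C(n+1,3) + 1. -/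
/-!
Write `n = 2m + 1` and `Q = ∑ᵥ C(sᵥ, 2)`, so that `∑ᵥ sᵥ² = C(n, 2) + 2Q`. `Q` counts the pairs
(vertex, two of its out-neighbours); a 3-set arises from at most one such pair, so `Q ≤ C(n, 3)`,
with equality when the scores are `0, …, n - 1`. By Cauchy–Schwarz `Q ≥ n C(m, 2)`, with
equality for the rotational tournament `i → i + 1, …, i + m`. If `Q < C(n, 3)`, two vertices
have the same score, and reversing the arc between them raises `Q` by exactly one. Hence `Q`
takes every value in `[n C(m, 2), C(n, 3)]`, an interval with `C(n + 1, 3) / 4 + 1` elements.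
-/

open Finset

theorem sum_range_choose_eq_choose_succ (n k : ℕ) :
    ∑ i ∈ range n, i.choose k = n.choose (k + 1) := by
  induction n with
  | zero => simp
  | succ n ih => rw [sum_range_succ, ih, Nat.choose_succ_succ' n k, add_comm]

theorem sq_eq_add_two_mul_choose_two (s : ℕ) : s ^ 2 = s + 2 * s.choose 2 := by
  induction s with
  | zero => simp
  | succ s ih => rw [Nat.choose_succ_succ', Nat.choose_one_right]; linear_combination ih

theorem choose_two_two_mul_add_one (m : ℕ) : (2 * m + 1).choose 2 = (2 * m + 1) * m := by
  rw [Nat.choose_two_right, Nat.add_sub_cancel, mul_left_comm, Nat.mul_div_cancel_left _ two_pos]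

theorem six_mul_choose_three_add_two (N : ℕ) :
    6 * (N + 2).choose 3 = (N + 2) * (N + 1) * N := by
  have := Nat.descFactorial_eq_factorial_mul_choose (N + 2) 3
  simp [Nat.descFactorial_succ, Nat.factorial] at this
  linarith

theorem choose_three_sub_mul_choose_two {n m : ℕ} (hn : n = 2 * m + 1) :
    n.choose 3 - n * m.choose 2 = (n + 1).choose 3 / 4 := by
  obtain _ | k := m
  · subst hn; rfl
  obtain rfl : n = 2 * k + 1 + 2 := by omega
  have h₁ := six_mul_choose_three_add_two (2 * k + 1)
  have h₂ := six_mul_choose_three_add_two (2 * k + 1 + 1)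
  have h₃ := sq_eq_add_two_mul_choose_two (k + 1)
  have : (2 * k + 1 + 2 + 1).choose 3 + 4 * ((2 * k + 1 + 2) * (k + 1).choose 2)
      = 4 * (2 * k + 1 + 2).choose 3 := by
    rw [add_right_comm] at h₂; nlinarith
  omega

section Tournament

variable {n : ℕ} {r : Fin n → Fin n → Prop}

theorem score_eq_card (r : Fin n → Fin n → Prop) (v : Fin n) [DecidablePred (r v)] :
    score r v = #{j | r v j} := by
  rw [score, Nat.card_eq_fintype_card, Fintype.card_subtype]

namespace IsTournament

theorem asymm (hr : IsTournament r) {i j : Fin n} (h : r i j) : ¬ r j i := by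
  rcases eq_or_ne i j with rfl | hij
  · exact hr.1 i
  · exact (hr.2 i j hij).1 h

theorem ne_of_rel (hr : IsTournament r) {i j : Fin n} (h : r i j) : i ≠ j :=
  fun hij => hr.1 i (hij ▸ h)

theorem total (hr : IsTournament r) {i j : Fin n} (hij : i ≠ j) : r i j ∨ r j i := by
  rw [hr.2 i j hij]; exact em' _

theorem score_lt (hr : IsTournament r) (v : Fin n) : score r v < n := by
  classical
  simpa [score_eq_card] using card_lt_univ_of_notMem (s := {j | r v j}) (by simpa using hr.1 v)

theorem sum_score (hr : IsTournament r) : ∑ i, score r i = n.choose 2 := by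
  classical
  have hpair : ∀ i j : Fin n,
      (if r i j then 1 else 0) + (if r j i then 1 else 0) = if i = j then 0 else 1 := by
    intro i j
    rcases eq_or_ne i j with rfl | hij
    · simp [hr.1 i]
    · rcases hr.total hij with h | h <;> simp [hij, h, hr.asymm h]
  have hrow : ∀ i : Fin n, ∑ j, (if i = j then 0 else 1) = n - 1 := fun i => by
    rw [sum_ite, sum_const_zero, zero_add, sum_const, smul_eq_mul, mul_one, filter_ne,
      card_erase_of_mem (mem_univ _), card_univ, Fintype.card_fin]
  have htwice : 2 * ∑ i, score r i = n * (n - 1) := by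
    calc 2 * ∑ i, score r i
        = ∑ i, ∑ j, ((if r i j then 1 else 0) + (if r j i then 1 else 0)) := by
          simp only [score_eq_card, card_filter, sum_add_distrib]
          rw [sum_comm (f := fun i j => if r j i then 1 else 0)]
          ring
      _ = n * (n - 1) := by simp [hpair, hrow]
  rw [Nat.choose_two_right, ← htwice, Nat.mul_div_cancel_left _ two_pos]

theorem sum_sq_score (hr : IsTournament r) :
    ∑ i, score r i ^ 2 = n.choose 2 + 2 * ∑ i, (score r i).choose 2 := by
  simp only [sq_eq_add_two_mul_choose_two (score r _), sum_add_distrib, ← mul_sum, hr.sum_score]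

theorem eq_of_insert_eq_insert (hr : IsTournament r) {v v' : Fin n} {P P' : Finset (Fin n)}
    (hP : ∀ j ∈ P, r v j) (hP' : ∀ j ∈ P', r v' j) (h : insert v P = insert v' P') : v = v' := by
  by_contra hne
  have h₁ : v' ∈ insert v P := h ▸ mem_insert_self v' P'
  have h₂ : v ∈ insert v' P' := h ▸ mem_insert_self v P
  rw [mem_insert] at h₁ h₂
  exact hr.asymm (hP _ (h₁.resolve_left (Ne.symm hne))) (hP' _ (h₂.resolve_left hne))

theorem sum_choose_two_score_le (hr : IsTournament r) :
    ∑ v, (score r v).choose 2 ≤ n.choose 3 := by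
  classical
  calc ∑ v, (score r v).choose 2 = #(univ.sigma fun v => powersetCard 2 {j | r v j}) := by
        simp [score_eq_card]
    _ ≤ #(powersetCard 3 (univ : Finset (Fin n))) := by
        refine card_le_card_of_injOn (fun x => insert x.1 x.2) ?_ ?_
        · rintro ⟨v, P⟩ hP
          simp only [coe_sigma, Set.mem_sigma_iff, mem_coe, mem_univ, mem_powersetCard,
            subset_iff, mem_filter, true_and] at hP
          rw [mem_coe, mem_powersetCard_univ, card_insert_of_notMem (fun hv => hr.1 v (hP.1 hv)),
            hP.2]
        · rintro ⟨v, P⟩ hP ⟨v', P'⟩ hP' h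
          simp only [coe_sigma, Set.mem_sigma_iff, mem_coe, mem_univ, mem_powersetCard,
            subset_iff, mem_filter, true_and] at hP hP' h
          obtain rfl := hr.eq_of_insert_eq_insert hP.1 hP'.1 h
          rw [← erase_insert (fun hv => hr.1 v (hP.1 hv)), h,
            erase_insert (fun hv => hr.1 v (hP'.1 hv))]
    _ = n.choose 3 := by simp

theorem sum_choose_two_score_of_injective (hr : IsTournament r)
    (hinj : Function.Injective (score r)) : ∑ v, (score r v).choose 2 = n.choose 3 := by
  let e : Fin n → Fin n := fun v => ⟨score r v, hr.score_lt v⟩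
  have he : e.Bijective := Finite.injective_iff_bijective.1 fun v w h => hinj (congrArg Fin.val h)
  rw [he.sum_comp (fun x => (x : ℕ).choose 2), Fin.sum_univ_eq_sum_range (·.choose 2),
    sum_range_choose_eq_choose_succ]

theorem mul_choose_two_le_sum_choose_two_score {m : ℕ} (hr : IsTournament r)
    (hn : n = 2 * m + 1) : n * m.choose 2 ≤ ∑ i, (score r i).choose 2 := by
  have hchoose : n.choose 2 = n * m := by rw [hn, choose_two_two_mul_add_one]
  have hcs : (n * m) ^ 2 ≤ n * ∑ i, score r i ^ 2 := by
    simpa [hr.sum_score, hchoose] using sq_sum_le_card_mul_sum_sq (s := univ) (f := score r)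
  have hsq : n * m ^ 2 ≤ ∑ i, score r i ^ 2 :=
    Nat.le_of_mul_le_mul_left (by linarith [show (n * m) ^ 2 = n * (n * m ^ 2) by ring])
      (by omega : 0 < n)
  have hm : n * m ^ 2 = n * m + 2 * (n * m.choose 2) := by
    rw [sq_eq_add_two_mul_choose_two m]; ring
  rw [hr.sum_sq_score, hchoose, hm] at hsq
  omega

end IsTournament

def reverseArc {α : Type*} [DecidableEq α] (r : α → α → Prop) (v w : α) : α → α → Prop :=
  fun a b => if s(a, b) = s(v, w) then r b a else r a b

theorem isTournament_reverseArc (hr : IsTournament r) (v w : Fin n) :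
    IsTournament (reverseArc r v w) := by
  refine ⟨fun i => by unfold reverseArc; split_ifs <;> exact hr.1 i, fun i j hij => ?_⟩
  unfold reverseArc
  rw [Sym2.eq_swap (a := j)]
  split_ifs
  · exact hr.2 j i hij.symm
  · exact hr.2 i j hij

variable {v w : Fin n}

theorem score_reverseArc_of_ne {x : Fin n} (hxv : x ≠ v) (hxw : x ≠ w) :
    score (reverseArc r v w) x = score r x := by
  classical
  rw [score_eq_card, score_eq_card]
  congr 1
  ext j
  simp [reverseArc, hxv, hxw]

namespace IsTournament

theorem score_reverseArc_left (hr : IsTournament r) (hvw : r v w) :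
    score (reverseArc r v w) v + 1 = score r v := by
  classical
  have : ({j | reverseArc r v w v j} : Finset (Fin n)) = ({j | r v j} : Finset _).erase w := by
    ext j
    rcases eq_or_ne j w with rfl | hj
    · simp [reverseArc, hr.asymm hvw]
    · simp [reverseArc, hj, hr.ne_of_rel hvw]
  rw [score_eq_card, score_eq_card, this, card_erase_add_one (by simpa using hvw)]

theorem score_reverseArc_right (hr : IsTournament r) (hvw : r v w) :
    score (reverseArc r v w) w = score r w + 1 := by
  classical
  have : ({j | reverseArc r v w w j} : Finset (Fin n)) = insert v ({j | r w j} : Finset _) := by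
    ext j
    rcases eq_or_ne j v with rfl | hj
    · simp [reverseArc, hvw, Sym2.eq_swap]
    · simp [reverseArc, hj, (hr.ne_of_rel hvw).symm]
  rw [score_eq_card, score_eq_card, this, card_insert_of_notMem (by simpa using hr.asymm hvw)]

theorem sum_choose_two_score_reverseArc (hr : IsTournament r) (hvw : r v w)
    (hs : score r v = score r w) :
    ∑ i, (score (reverseArc r v w) i).choose 2 = ∑ i, (score r i).choose 2 + 1 := by
  classical
  have hne := hr.ne_of_rel hvw
  have hrest : ∑ i ∈ {v, w}ᶜ, (score (reverseArc r v w) i).choose 2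
      = ∑ i ∈ {v, w}ᶜ, (score r i).choose 2 :=
    sum_congr rfl fun x hx => by
      simp only [mem_compl, mem_insert, mem_singleton, not_or] at hx
      rw [score_reverseArc_of_ne hx.1 hx.2]
  rw [← sum_add_sum_compl {v, w}, ← sum_add_sum_compl {v, w} (fun i => (score r i).choose 2),
    hrest, sum_pair hne, sum_pair hne, hr.score_reverseArc_right hvw, ← hs,
    ← hr.score_reverseArc_left hvw]
  simp only [Nat.choose_succ_succ' _ 1, Nat.choose_one_right]
  ring

theorem exists_sum_choose_two_score_eq_succ (hr : IsTournament r)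
    (hlt : ∑ i, (score r i).choose 2 < n.choose 3) :
    ∃ r' : Fin n → Fin n → Prop, IsTournament r' ∧
      ∑ i, (score r' i).choose 2 = ∑ i, (score r i).choose 2 + 1 := by
  obtain ⟨v, w, hs, hvw⟩ := Function.not_injective_iff.1
    fun hinj => hlt.ne (hr.sum_choose_two_score_of_injective hinj)
  rcases hr.total hvw with h | h
  · exact ⟨_, isTournament_reverseArc hr v w, hr.sum_choose_two_score_reverseArc h hs⟩
  · exact ⟨_, isTournament_reverseArc hr w v, hr.sum_choose_two_score_reverseArc h hs.symm⟩

theorem exists_sum_choose_two_score_eq (hr : IsTournament r) {q : ℕ}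
    (hle : ∑ i, (score r i).choose 2 ≤ q) (hq : q ≤ n.choose 3) :
    ∃ r' : Fin n → Fin n → Prop, IsTournament r' ∧ ∑ i, (score r' i).choose 2 = q := by
  induction q, hle using Nat.le_induction with
  | base => exact ⟨r, hr, rfl⟩
  | succ q _ ih =>
    obtain ⟨r', hr', rfl⟩ := ih (by omega)
    exact hr'.exists_sum_choose_two_score_eq_succ hq

end IsTournament

end Tournament

def rotationalTournament (m : ℕ) : Fin (2 * m + 1) → Fin (2 * m + 1) → Prop :=
  fun i j => ((j - i : Fin (2 * m + 1)) : ℕ) ∈ Icc 1 m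

theorem isTournament_rotationalTournament (m : ℕ) : IsTournament (rotationalTournament m) := by
  refine ⟨fun i => by simp [rotationalTournament], fun i j hij => ?_⟩
  have hx : j - i ≠ 0 := sub_ne_zero.2 hij.symm
  have hlt := (j - i).isLt
  have hpos : (j - i : Fin (2 * m + 1)).val ≠ 0 := Fin.val_ne_zero_iff.2 hx
  simp only [rotationalTournament, ← neg_sub j i, Fin.val_neg, if_neg hx, mem_Icc]
  omega

theorem score_rotationalTournament (m : ℕ) (i : Fin (2 * m + 1)) :
    score (rotationalTournament m) i = m := by
  classical
  have hcard : #{j | rotationalTournament m i j} = #(Icc 1 m) := by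
    refine card_nbij' (fun j => (j - i : Fin (2 * m + 1)).val)
      (fun k => i + Fin.ofNat (2 * m + 1) k) ?_ ?_ ?_ ?_
    · intro j hj; simpa [rotationalTournament] using hj
    · intro k hk
      simp only [coe_Icc, Set.mem_Icc] at hk
      simp [rotationalTournament, Nat.mod_eq_of_lt (show k < 2 * m + 1 by omega), hk]
    · intro j _; simp
    · intro k hk
      simp only [coe_Icc, Set.mem_Icc] at hk
      simp [Nat.mod_eq_of_lt (show k < 2 * m + 1 by omega)]
  rw [score_eq_card, hcard, Nat.card_Icc, Nat.add_sub_cancel]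

theorem exists_isTournament_score_eq {n m : ℕ} (hn : n = 2 * m + 1) :
    ∃ r : Fin n → Fin n → Prop, IsTournament r ∧ ∀ i, score r i = m := by
  subst hn
  exact ⟨_, isTournament_rotationalTournament m, score_rotationalTournament m⟩

theorem stmt11 {n : ℕ} (hn : Odd n) :
    Set.ncard {v : ℕ | ∃ r : Fin n → Fin n → Prop,
        IsTournament r ∧ ∑ i : Fin n, (score r i) ^ 2 = v}
      = (n + 1).choose 3 / 4 + 1 := by
  obtain ⟨m, hm⟩ := hn
  have hn : n = 2 * m + 1 := by omega
  obtain ⟨r₀, hr₀, hs₀⟩ := exists_isTournament_score_eq hn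
  have hmin : ∑ i, (score r₀ i).choose 2 = n * m.choose 2 := by simp [hs₀]
  have hvalues : {v : ℕ | ∃ r : Fin n → Fin n → Prop,
      IsTournament r ∧ ∑ i : Fin n, (score r i) ^ 2 = v}
      = (fun q => n.choose 2 + 2 * q) '' Set.Icc (n * m.choose 2) (n.choose 3) := by
    ext v
    constructor
    · rintro ⟨r, hr, rfl⟩
      exact ⟨_, ⟨hr.mul_choose_two_le_sum_choose_two_score hn, hr.sum_choose_two_score_le⟩,
        hr.sum_sq_score.symm⟩
    · rintro ⟨q, ⟨hq₁, hq₂⟩, rfl⟩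
      obtain ⟨r, hr, rfl⟩ := hr₀.exists_sum_choose_two_score_eq (hmin.trans_le hq₁) hq₂
      exact ⟨r, hr, hr.sum_sq_score⟩
  have hle := hmin ▸ hr₀.sum_choose_two_score_le
  rw [hvalues, Set.ncard_image_of_injective _ fun a b h => by simpa using h, ← coe_Icc,
    Set.ncard_coe_finset, Nat.card_Icc, ← choose_three_sub_mul_choose_two hn]
  omega
end

section
/- For a tournament adjacency matrix A on n vertices, tr(A⁴) = 4·c₄(T), where c₄(T) is the number of 4-vertex subsets inducing a strongly connected 4-tournament. -/
/-- The subtournament induced on `t` is strongly connected. -/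
def StrongOn {n : ℕ} (r : Fin n → Fin n → Prop) (t : Finset (Fin n)) : Prop :=
  ∀ x ∈ t, ∀ y ∈ t,
    Relation.ReflTransGen (fun a b : Fin n => a ∈ t ∧ b ∈ t ∧ r a b) x y

/-- A tournament on `Fin 4` determined by the six booleans above the diagonal. -/
def mkT (p q s u v w : Bool) : Fin 4 → Fin 4 → Bool :=
  fun i j => ![![false, p, q, s], ![!p, false, u, v], ![!q, !u, false, w], ![!s, !v, !w, false]] i j

theorem fin4count : ∀ p q s u v w : Bool,
    (∀ i : Fin 4, ∃ j, mkT p q s u v w i j = true) →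
    (∀ i : Fin 4, ∃ j, mkT p q s u v w j i = true) →
    (Finset.univ.filter (fun x : Fin 4 × Fin 4 × Fin 4 × Fin 4 =>
       mkT p q s u v w x.1 x.2.1 = true ∧ mkT p q s u v w x.2.1 x.2.2.1 = true ∧
       mkT p q s u v w x.2.2.1 x.2.2.2 = true ∧ mkT p q s u v w x.2.2.2 x.1 = true)).card = 4 := by
  decide

theorem card_four {α : Type*} [DecidableEq α] {i j k l : α} (hij : i ≠ j) (hik : i ≠ k)
    (hil : i ≠ l) (hjk : j ≠ k) (hjl : j ≠ l) (hkl : k ≠ l) :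
    ({i, j, k, l} : Finset α).card = 4 := by
  rw [Finset.card_insert_of_notMem (by simp [hij, hik, hil]),
    Finset.card_insert_of_notMem (by simp [hjk, hjl]),
    Finset.card_insert_of_notMem (by simp [hkl]), Finset.card_singleton]

theorem stmt14 {n : ℕ} (r : Fin n → Fin n → Prop) [DecidableRel r]
    (hT : IsTournament r)
    (A : Matrix (Fin n) (Fin n) ℝ)
    (hA : A = Matrix.of fun i j => if r i j then (1 : ℝ) else 0) :
    Matrix.trace (A ^ 4)
      = 4 * (Set.ncard {t : Finset (Fin n) | t.card = 4 ∧ StrongOn r t} : ℝ) := by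
  classical
  obtain ⟨hirr, hasym⟩ := hT
  have hr_ne : ∀ {i j : Fin n}, r i j → i ≠ j := by
    rintro i j h rfl; exact hirr i h
  have hr_not : ∀ {i j : Fin n}, r i j → ¬ r j i := by
    intro i j h; exact (hasym i j (hr_ne h)).mp h
  set P : Fin n × Fin n × Fin n × Fin n → Prop := fun p =>
    r p.1 p.2.1 ∧ r p.2.1 p.2.2.1 ∧ r p.2.2.1 p.2.2.2 ∧ r p.2.2.2 p.1 with hP
  set cyc : Finset (Fin n × Fin n × Fin n × Fin n) := Finset.univ.filter P with hcyc
  -- distinctness of the four vertices of a cycle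
  have hdist : ∀ p : Fin n × Fin n × Fin n × Fin n, P p →
      p.1 ≠ p.2.1 ∧ p.1 ≠ p.2.2.1 ∧ p.1 ≠ p.2.2.2 ∧ p.2.1 ≠ p.2.2.1 ∧
      p.2.1 ≠ p.2.2.2 ∧ p.2.2.1 ≠ p.2.2.2 := by
    rintro ⟨i, j, k, l⟩ ⟨h1, h2, h3, h4⟩
    dsimp only at h1 h2 h3 h4 ⊢
    refine ⟨hr_ne h1, ?_, (hr_ne h4).symm, hr_ne h2, ?_, hr_ne h3⟩
    · rintro rfl; exact hr_not h1 h2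
    · rintro rfl; exact hr_not h2 h3
  -- Step 1 : the trace counts 4-cycles
  have step1 : Matrix.trace (A ^ 4) = (cyc.card : ℝ) := by
    subst hA
    rw [hcyc, ← Finset.sum_boole]
    rw [← Equiv.sum_comp (⟨fun p => (p.1, p.2.2.2, p.2.2.1, p.2.1),
          fun p => (p.1, p.2.2.2, p.2.2.1, p.2.1), fun p => rfl, fun p => rfl⟩ :
        (Fin n × Fin n × Fin n × Fin n) ≃ (Fin n × Fin n × Fin n × Fin n))]
    rw [show (4 : ℕ) = 3 + 1 from rfl, pow_succ, pow_succ, pow_succ, pow_one]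
    simp only [hP, Matrix.trace, Matrix.diag, Matrix.mul_apply, Matrix.of_apply,
      Finset.sum_mul, Finset.mul_sum, Fintype.sum_prod_type, Equiv.coe_fn_mk]
    simp only [ite_mul, mul_ite, one_mul, mul_one, zero_mul, mul_zero, ite_and]
    apply Finset.sum_congr rfl; intro i _
    apply Finset.sum_congr rfl; intro j _
    apply Finset.sum_congr rfl; intro k _
    apply Finset.sum_congr rfl; intro l _
    by_cases h1 : r j i <;> by_cases h2 : r k j <;> by_cases h3 : r l k <;> by_cases h4 : r i l <;>
      simp [h1, h2, h3, h4]
  -- the finset of strong 4-sets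
  set S : Finset (Finset (Fin n)) :=
    Finset.univ.filter (fun t : Finset (Fin n) => t.card = 4 ∧ StrongOn r t) with hS
  have hncard : ({t : Finset (Fin n) | t.card = 4 ∧ StrongOn r t} : Set (Finset (Fin n))).ncard
      = S.card := by
    rw [hS, Set.ncard_eq_toFinset_card']
    congr 1
    ext t
    simp [Set.mem_toFinset]
  -- the vertex set of a 4-tuple
  set g : Fin n × Fin n × Fin n × Fin n → Finset (Fin n) := fun p =>
    {p.1, p.2.1, p.2.2.1, p.2.2.2} with hg
  have hmemg : ∀ p : Fin n × Fin n × Fin n × Fin n, P p → (g p).card = 4 := by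
    intro p hp
    obtain ⟨d1, d2, d3, d4, d5, d6⟩ := hdist p hp
    exact card_four d1 d2 d3 d4 d5 d6
  -- a 4-cycle induces a strong 4-set
  have hmapS : ∀ p ∈ cyc, g p ∈ S := by
    rintro ⟨i, j, k, l⟩ hp
    rw [hcyc, Finset.mem_filter] at hp
    obtain ⟨-, h1, h2, h3, h4⟩ := hp
    rw [hS, Finset.mem_filter]
    refine ⟨Finset.mem_univ _, hmemg _ ⟨h1, h2, h3, h4⟩, ?_⟩
    set t : Finset (Fin n) := {i, j, k, l} with ht
    have hi : i ∈ t := by simp [ht]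
    have hj : j ∈ t := by simp [ht]
    have hk : k ∈ t := by simp [ht]
    have hl : l ∈ t := by simp [ht]
    set rel : Fin n → Fin n → Prop := fun a b => a ∈ t ∧ b ∈ t ∧ r a b with hrel
    have Eij : Relation.ReflTransGen rel i j := Relation.ReflTransGen.single ⟨hi, hj, h1⟩
    have Ejk : Relation.ReflTransGen rel j k := Relation.ReflTransGen.single ⟨hj, hk, h2⟩
    have Ekl : Relation.ReflTransGen rel k l := Relation.ReflTransGen.single ⟨hk, hl, h3⟩
    have Eli : Relation.ReflTransGen rel l i := Relation.ReflTransGen.single ⟨hl, hi, h4⟩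
    have fromi : ∀ y ∈ t, Relation.ReflTransGen rel i y := by
      intro y hy
      rw [ht] at hy
      simp only [Finset.mem_insert, Finset.mem_singleton] at hy
      rcases hy with rfl | rfl | rfl | rfl
      · exact Relation.ReflTransGen.refl
      · exact Eij
      · exact Eij.trans Ejk
      · exact (Eij.trans Ejk).trans Ekl
    have toi : ∀ x ∈ t, Relation.ReflTransGen rel x i := by
      intro x hx
      rw [ht] at hx
      simp only [Finset.mem_insert, Finset.mem_singleton] at hx
      rcases hx with rfl | rfl | rfl | rfl
      · exact Relation.ReflTransGen.refl
      · exact (Ejk.trans Ekl).trans Eli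
      · exact Ekl.trans Eli
      · exact Eli
    intro x hx y hy
    exact (toi x hx).trans (fromi y hy)
  -- each strong 4-set contains exactly four 4-cycles
  have hfib : ∀ t ∈ S, (cyc.filter (fun p => g p = t)).card = 4 := by
    intro t htS
    rw [hS, Finset.mem_filter] at htS
    obtain ⟨-, ht4, hst⟩ := htS
    set v : Fin 4 → Fin n := fun a => t.orderEmbOfFin ht4 a with hv
    have hv_mem : ∀ a, v a ∈ t := fun a => Finset.orderEmbOfFin_mem t ht4 a
    have hv_inj : Function.Injective v := (t.orderEmbOfFin ht4).injective
    have hv_surj : ∀ x ∈ t, ∃ a, v a = x := by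
      intro x hx
      have : x ∈ Set.range (t.orderEmbOfFin ht4) := by
        rw [Finset.range_orderEmbOfFin]; exact hx
      obtain ⟨a, ha⟩ := this
      exact ⟨a, ha⟩
    set b : Fin 4 → Fin 4 → Bool := fun a c => decide (r (v a) (v c)) with hb
    have hb_iff : ∀ a c, b a c = true ↔ r (v a) (v c) := by
      intro a c; simp [hb]
    -- b agrees with a matrix of six booleans
    have hb_diag : ∀ a, b a a = false := by
      intro a
      simp only [hb, decide_eq_false_iff_not]
      exact hirr _
    have hb_flip : ∀ a c, a ≠ c → b c a = !(b a c) := by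
      intro a c hac
      have hvac : v a ≠ v c := fun h => hac (hv_inj h)
      rcases hbc : b a c with _ | _
      · simp only [hb, decide_eq_true_eq, Bool.not_false]
        rw [hb] at hbc
        simp only [decide_eq_false_iff_not] at hbc
        exact (hasym (v c) (v a) hvac.symm).mpr (by simpa using hbc)
      · simp only [hb, Bool.not_true, decide_eq_false_iff_not]
        rw [hb] at hbc
        simp only [decide_eq_true_eq] at hbc
        exact hr_not hbc
    have hbeq : b = mkT (b 0 1) (b 0 2) (b 0 3) (b 1 2) (b 1 3) (b 2 3) := by
      funext a c
      fin_cases a <;> fin_cases c <;>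
        first
          | rfl
          | (exact hb_diag _)
          | (exact hb_flip _ _ (by decide))
    -- no sinks, no sources (from strongness)
    have htwo : 1 < t.card := by omega
    have hnosink : ∀ a : Fin 4, ∃ c, b a c = true := by
      intro a
      obtain ⟨y, hy, hyne⟩ := Finset.exists_mem_ne htwo (v a)
      have hpath := hst (v a) (hv_mem a) y hy
      rcases hpath.cases_head with heq | ⟨z, ⟨-, hz, hrz⟩, -⟩
      · exact absurd heq.symm hyne
      · obtain ⟨c, hc⟩ := hv_surj z hz
        exact ⟨c, (hb_iff a c).mpr (hc ▸ hrz)⟩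
    have hnosource : ∀ a : Fin 4, ∃ c, b c a = true := by
      intro a
      obtain ⟨y, hy, hyne⟩ := Finset.exists_mem_ne htwo (v a)
      have hpath := hst y hy (v a) (hv_mem a)
      rcases hpath.cases_tail with heq | ⟨z, -, ⟨hz, -, hrz⟩⟩
      · exact absurd heq.symm hyne
      · obtain ⟨c, hc⟩ := hv_surj z hz
        exact ⟨c, (hb_iff c a).mpr (hc ▸ hrz)⟩
    have h4 :
        (Finset.univ.filter (fun x : Fin 4 × Fin 4 × Fin 4 × Fin 4 =>
          b x.1 x.2.1 = true ∧ b x.2.1 x.2.2.1 = true ∧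
          b x.2.2.1 x.2.2.2 = true ∧ b x.2.2.2 x.1 = true)).card = 4 := by
      rw [hbeq]
      exact fin4count _ _ _ _ _ _ (hbeq ▸ hnosink) (hbeq ▸ hnosource)
    -- the fiber over t is the image of the Fin-4 cycles
    have himg : cyc.filter (fun p => g p = t) =
        (Finset.univ.filter (fun x : Fin 4 × Fin 4 × Fin 4 × Fin 4 =>
          b x.1 x.2.1 = true ∧ b x.2.1 x.2.2.1 = true ∧
          b x.2.2.1 x.2.2.2 = true ∧ b x.2.2.2 x.1 = true)).image
          (fun x => (v x.1, v x.2.1, v x.2.2.1, v x.2.2.2)) := by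
      ext p
      simp only [Finset.mem_filter, Finset.mem_image, Finset.mem_univ, true_and, hcyc]
      constructor
      · rintro ⟨hpc, hgt⟩
        have hp1 : p.1 ∈ t := by rw [← hgt]; simp [hg]
        have hp2 : p.2.1 ∈ t := by rw [← hgt]; simp [hg]
        have hp3 : p.2.2.1 ∈ t := by rw [← hgt]; simp [hg]
        have hp4 : p.2.2.2 ∈ t := by rw [← hgt]; simp [hg]
        obtain ⟨a1, ha1⟩ := hv_surj _ hp1
        obtain ⟨a2, ha2⟩ := hv_surj _ hp2
        obtain ⟨a3, ha3⟩ := hv_surj _ hp3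
        obtain ⟨a4, ha4⟩ := hv_surj _ hp4
        obtain ⟨h1, h2, h3, h4'⟩ := hpc
        refine ⟨(a1, a2, a3, a4), ⟨?_, ?_, ?_, ?_⟩, ?_⟩
        · exact (hb_iff _ _).mpr (by rw [ha1, ha2]; exact h1)
        · exact (hb_iff _ _).mpr (by rw [ha2, ha3]; exact h2)
        · exact (hb_iff _ _).mpr (by rw [ha3, ha4]; exact h3)
        · exact (hb_iff _ _).mpr (by rw [ha4, ha1]; exact h4')
        · rw [show p = (p.1, p.2.1, p.2.2.1, p.2.2.2) from rfl, ha1, ha2, ha3, ha4]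
      · rintro ⟨x, ⟨h1, h2, h3, h4'⟩, rfl⟩
        have hc1 := (hb_iff _ _).mp h1
        have hc2 := (hb_iff _ _).mp h2
        have hc3 := (hb_iff _ _).mp h3
        have hc4 := (hb_iff _ _).mp h4'
        refine ⟨⟨hc1, hc2, hc3, hc4⟩, ?_⟩
        apply Finset.eq_of_subset_of_card_le
        · intro z hz
          simp only [hg, Finset.mem_insert, Finset.mem_singleton] at hz
          rcases hz with rfl | rfl | rfl | rfl <;> exact hv_mem _
        · rw [ht4, hmemg _ ⟨hc1, hc2, hc3, hc4⟩]
    rw [himg, Finset.card_image_of_injective _ ?_, h4]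
    intro x y hxy
    simp only [Prod.mk.injEq] at hxy
    obtain ⟨e1, e2, e3, e4⟩ := hxy
    exact Prod.ext (hv_inj e1) (Prod.ext (hv_inj e2) (Prod.ext (hv_inj e3) (hv_inj e4)))
  -- put everything together
  have step2 : cyc.card = 4 * S.card := by
    rw [Finset.card_eq_sum_card_fiberwise hmapS]
    rw [Finset.sum_congr rfl hfib, Finset.sum_const, smul_eq_mul, Nat.mul_comm]
  rw [step1, hncard, step2]
  push_cast
  ring
end

section
/- Let T be a regular tournament on n = 2m+1 vertices in which the out-set of every vertex induces a transitive subtournament. Then T is isomorphic to the consecutive rotational tournament: vertices can be labeled by Z_n so that x → y if and only if y - x mod n ∈ {1,2,...,m}. -/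
namespace Stmt15

open Finset

variable {n : ℕ}

open Classical in
noncomputable def outS (r : Fin n → Fin n → Prop) (v : Fin n) : Finset (Fin n) :=
  Finset.univ.filter fun j => r v j

open Classical in
noncomputable def inS (r : Fin n → Fin n → Prop) (v : Fin n) : Finset (Fin n) :=
  Finset.univ.filter fun j => r j v

open Classical in
noncomputable def rk (r : Fin n → Fin n → Prop) (A : Finset (Fin n)) (u : Fin n) : ℕ :=
  (A.filter fun a => r a u).card

lemma mem_outS {r : Fin n → Fin n → Prop} {v u : Fin n} : u ∈ outS r v ↔ r v u := by
  classical
  simp [outS]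

lemma mem_inS {r : Fin n → Fin n → Prop} {v u : Fin n} : u ∈ inS r v ↔ r u v := by
  classical
  simp [inS]

variable {r : Fin n → Fin n → Prop}

lemma asymm' (hT : IsTournament r) {a b : Fin n} (h : r a b) : ¬ r b a := by
  by_cases hab : a = b
  · subst hab; exact absurd h (hT.1 a)
  · exact (hT.2 a b hab).mp h

lemma total' (hT : IsTournament r) {a b : Fin n} (h : a ≠ b) : r a b ∨ r b a := by
  by_cases hab : r a b
  · exact Or.inl hab
  · exact Or.inr ((hT.2 b a h.symm).mpr hab)

lemma rk_lt_card (hT : IsTournament r) {A : Finset (Fin n)} {u : Fin n} (hu : u ∈ A) :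
    rk r A u < A.card := by
  classical
  have hsub : (A.filter fun a => r a u) ⊆ A.erase u := by
    intro a ha
    rw [Finset.mem_filter] at ha
    exact Finset.mem_erase.mpr ⟨fun h => (hT.1 u) (h ▸ ha.2), ha.1⟩
  calc rk r A u ≤ (A.erase u).card := Finset.card_le_card hsub
    _ < A.card := Finset.card_erase_lt_of_mem hu

lemma rk_lt_of_r (hT : IsTournament r) {A : Finset (Fin n)}
    (htrans : ∀ a ∈ A, ∀ b ∈ A, ∀ c ∈ A, r a b → r b c → r a c)
    {u u' : Fin n} (hu : u ∈ A) (hu' : u' ∈ A) (h : r u u') :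
    rk r A u < rk r A u' := by
  classical
  apply Finset.card_lt_card
  constructor
  · intro a ha
    rw [Finset.mem_filter] at ha ⊢
    exact ⟨ha.1, htrans a ha.1 u hu u' hu' ha.2 h⟩
  · intro hcon
    have h2 := hcon (Finset.mem_filter.mpr ⟨hu, h⟩)
    rw [Finset.mem_filter] at h2
    exact hT.1 u h2.2

lemma rk_lt_iff (hT : IsTournament r) {A : Finset (Fin n)}
    (htrans : ∀ a ∈ A, ∀ b ∈ A, ∀ c ∈ A, r a b → r b c → r a c)
    {u u' : Fin n} (hu : u ∈ A) (hu' : u' ∈ A) :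
    r u u' ↔ rk r A u < rk r A u' := by
  constructor
  · exact rk_lt_of_r hT htrans hu hu'
  · intro h
    by_cases he : u = u'
    · subst he; exact absurd h (lt_irrefl _)
    · rcases total' hT he with h1 | h1
      · exact h1
      · have := rk_lt_of_r hT htrans hu' hu h1
        omega

lemma rk_injOn (hT : IsTournament r) {A : Finset (Fin n)}
    (htrans : ∀ a ∈ A, ∀ b ∈ A, ∀ c ∈ A, r a b → r b c → r a c)
    {u u' : Fin n} (hu : u ∈ A) (hu' : u' ∈ A) (h : rk r A u = rk r A u') : u = u' := by
  by_contra hne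
  rcases total' hT hne with h1 | h1
  · have := rk_lt_of_r hT htrans hu hu' h1; omega
  · have := rk_lt_of_r hT htrans hu' hu h1; omega

lemma image_rk (hT : IsTournament r) {A : Finset (Fin n)}
    (htrans : ∀ a ∈ A, ∀ b ∈ A, ∀ c ∈ A, r a b → r b c → r a c) :
    A.image (rk r A) = Finset.range A.card := by
  classical
  apply Finset.eq_of_subset_of_card_le
  · intro j hj
    rw [Finset.mem_image] at hj
    obtain ⟨u, hu, rfl⟩ := hj
    exact Finset.mem_range.mpr (rk_lt_card hT hu)
  · rw [Finset.card_range,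
      Finset.card_image_of_injOn (fun u hu u' hu' h => rk_injOn hT htrans hu hu' h)]

lemma card_rk_ge (hT : IsTournament r) {A : Finset (Fin n)}
    (htrans : ∀ a ∈ A, ∀ b ∈ A, ∀ c ∈ A, r a b → r b c → r a c) (k : ℕ) :
    (A.filter fun u' => k ≤ rk r A u').card = A.card - k := by
  classical
  have h1 : ((A.filter fun u' => k ≤ rk r A u').image (rk r A)).card
      = (A.filter fun u' => k ≤ rk r A u').card :=
    Finset.card_image_of_injOn (fun u hu u' hu' h =>
      rk_injOn hT htrans (Finset.mem_of_mem_filter _ hu) (Finset.mem_of_mem_filter _ hu') h)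
  have h2 : (A.filter fun u' => k ≤ rk r A u').image (rk r A)
      = (A.image (rk r A)).filter fun j => k ≤ j := by
    exact Finset.filter_image.symm
  have h3 : ((Finset.range A.card).filter fun j => k ≤ j) = Finset.Ico k A.card := by
    ext j
    simp [Finset.mem_Ico, Finset.mem_filter, Finset.mem_range, and_comm]
  rw [← h1, h2, image_rk hT htrans, h3, Nat.card_Ico]

lemma exists_sink (hT : IsTournament r) {A : Finset (Fin n)}
    (htrans : ∀ a ∈ A, ∀ b ∈ A, ∀ c ∈ A, r a b → r b c → r a c)
    (hne : A.Nonempty) : ∃ s ∈ A, ∀ t ∈ A, t ≠ s → r t s := by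
  classical
  have hcard : 0 < A.card := Finset.card_pos.mpr hne
  have hm : A.card - 1 ∈ A.image (rk r A) := by
    rw [image_rk hT htrans]; exact Finset.mem_range.mpr (by omega)
  rw [Finset.mem_image] at hm
  obtain ⟨s, hs, hrk⟩ := hm
  refine ⟨s, hs, fun t ht hts => ?_⟩
  have h1 : rk r A t < A.card := rk_lt_card hT ht
  have h2 : rk r A t ≠ rk r A s := fun h => hts (rk_injOn hT htrans ht hs h)
  exact (rk_lt_iff hT htrans ht hs).mpr (by omega)


section Main

variable {m : ℕ}

lemma card_outS (hreg : ∀ v, score r v = m) (v : Fin n) : (outS r v).card = m := by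
  classical
  have h := hreg v
  rw [score, Nat.card_eq_fintype_card, Fintype.card_subtype] at h
  simpa [outS] using h

lemma card_inS (hn : n = 2 * m + 1) (hT : IsTournament r) (hreg : ∀ v, score r v = m)
    (v : Fin n) : (inS r v).card = m := by
  classical
  have hx : inS r v = Finset.univ \ insert v (outS r v) := by
    ext u
    simp only [Finset.mem_sdiff, Finset.mem_univ, true_and, Finset.mem_insert, mem_inS,
      mem_outS]
    constructor
    · intro h
      push_neg
      exact ⟨fun he => hT.1 v (he ▸ h), asymm' hT h⟩
    · intro h
      push_neg at h
      rcases total' hT (fun he => h.1 he) with h1 | h1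
      · exact h1
      · exact absurd h1 h.2
  rw [hx, Finset.card_sdiff_of_subset (Finset.subset_univ _),
    Finset.card_insert_of_notMem (fun hc => hT.1 v (mem_outS.mp hc)), card_outS hreg v,
    Finset.card_univ, Fintype.card_fin]
  omega

lemma trans_outS
    (houtset : ∀ v x y z : Fin n, r v x → r v y → r v z → r x y → r y z → r x z)
    (v : Fin n) :
    ∀ a ∈ outS r v, ∀ b ∈ outS r v, ∀ c ∈ outS r v, r a b → r b c → r a c :=
  fun a ha b hb c hc hab hbc =>
    houtset v a b c (mem_outS.mp ha) (mem_outS.mp hb) (mem_outS.mp hc) hab hbc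

lemma trans_inS (hn : n = 2 * m + 1) (hT : IsTournament r) (hreg : ∀ v, score r v = m)
    (houtset : ∀ v x y z : Fin n, r v x → r v y → r v z → r x y → r y z → r x z)
    (u : Fin n) :
    ∀ a ∈ inS r u, ∀ b ∈ inS r u, ∀ c ∈ inS r u, r a b → r b c → r a c := by
  classical
  intro a ha b hb c hc hab hbc
  rw [mem_inS] at ha hb hc
  -- outS r u is nonempty
  have hne : (outS r u).Nonempty := by
    rw [← Finset.card_pos, card_outS hreg u]
    by_contra hm
    have hm0 : m = 0 := by omega
    have hn1 : n = 1 := by omega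
    have : a = u := by
      apply Fin.ext
      have h1 := a.isLt
      have h2 := u.isLt
      omega
    exact hT.1 u (this ▸ ha)
  obtain ⟨s, hs, hsink⟩ := exists_sink hT (trans_outS houtset u) hne
  have hus : r u s := mem_outS.mp hs
  have hkey : insert u ((outS r u).erase s) = inS r s := by
    apply Finset.eq_of_subset_of_card_le
    · intro t ht
      rw [Finset.mem_insert] at ht
      rw [mem_inS]
      rcases ht with rfl | ht
      · exact hus
      · rw [Finset.mem_erase] at ht
        exact hsink t ht.2 ht.1
    · rw [card_inS hn hT hreg s,
        Finset.card_insert_of_notMem (fun hc => hT.1 u (mem_outS.mp (Finset.mem_of_mem_erase hc))),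
        Finset.card_erase_of_mem hs, card_outS hreg u]
      omega
  have hout : ∀ t : Fin n, r t u → t ∈ outS r s := by
    intro t htu
    have htnes : t ≠ s := by
      rintro rfl
      exact asymm' hT htu hus
    rcases total' hT htnes.symm with h1 | h1
    · exact mem_outS.mpr h1
    · exfalso
      have : t ∈ insert u ((outS r u).erase s) := by
        rw [hkey, mem_inS]; exact h1
      rw [Finset.mem_insert, Finset.mem_erase] at this
      rcases this with rfl | ⟨_, hto⟩
      · exact hT.1 t htu
      · exact asymm' hT htu (mem_outS.mp hto)
  exact houtset s a b c (mem_outS.mp (hout a ha)) (mem_outS.mp (hout b hb))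
    (mem_outS.mp (hout c hc)) hab hbc


lemma upward (hn : n = 2 * m + 1) (hT : IsTournament r) (hreg : ∀ v, score r v = m)
    (houtset : ∀ v x y z : Fin n, r v x → r v y → r v z → r x y → r y z → r x z)
    {v0 u u' w : Fin n} (hu : u ∈ outS r v0) (hu' : u' ∈ outS r v0)
    (hw : w ∈ inS r v0) (h : r u w) (huu' : r u u') : r u' w := by
  by_contra hc
  have hwne : w ≠ u' := fun he => asymm' hT (mem_inS.mp hw) (he ▸ mem_outS.mp hu')
  have hwu' : r w u' := (total' hT hwne).resolve_right hc
  exact asymm' hT (mem_outS.mp hu)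
    (trans_inS hn hT hreg houtset u' u (mem_inS.mpr huu') w (mem_inS.mpr hwu') v0
      (mem_inS.mpr (mem_outS.mp hu')) h (mem_inS.mp hw))

open Classical in
lemma card_X_beats (hn : n = 2 * m + 1) (hT : IsTournament r) (hreg : ∀ v, score r v = m)
    {v0 w : Fin n} (hw : w ∈ inS r v0) :
    ((outS r v0).filter fun u => r u w).card = m - rk r (inS r v0) w := by
  classical
  have hsplit : inS r w
      = (outS r v0).filter (fun u => r u w) ∪ (inS r v0).filter (fun u => r u w) := by
    ext t
    simp only [mem_inS, Finset.mem_union, Finset.mem_filter, mem_outS]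
    constructor
    · intro h
      have htv0 : v0 ≠ t := fun he => asymm' hT (mem_inS.mp hw) (he ▸ h)
      rcases total' hT htv0 with h1 | h1
      · exact Or.inl ⟨h1, h⟩
      · exact Or.inr ⟨h1, h⟩
    · rintro (⟨_, h⟩ | ⟨_, h⟩) <;> exact h
  have hdis : Disjoint ((outS r v0).filter (fun u => r u w))
      ((inS r v0).filter (fun u => r u w)) := by
    rw [Finset.disjoint_left]
    intro t ht1 ht2
    rw [Finset.mem_filter] at ht1 ht2
    exact asymm' hT (mem_outS.mp ht1.1) (mem_inS.mp ht2.1)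
  have hc := card_inS hn hT hreg w
  rw [hsplit, Finset.card_union_of_disjoint hdis] at hc
  have hrk : ((inS r v0).filter fun u => r u w).card = rk r (inS r v0) w := rfl
  have hτ : rk r (inS r v0) w < m := by
    have := rk_lt_card hT hw
    rwa [card_inS hn hT hreg v0] at this
  omega

lemma F4 (hn : n = 2 * m + 1) (hT : IsTournament r) (hreg : ∀ v, score r v = m)
    (houtset : ∀ v x y z : Fin n, r v x → r v y → r v z → r x y → r y z → r x z)
    {v0 u w : Fin n} (hu : u ∈ outS r v0) (hw : w ∈ inS r v0) :
    r u w ↔ rk r (inS r v0) w ≤ rk r (outS r v0) u := by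
  classical
  have hXc : (outS r v0).card = m := card_outS hreg v0
  have htX := trans_outS houtset v0
  have hρ : rk r (outS r v0) u < m := hXc ▸ rk_lt_card hT hu
  have hτ : rk r (inS r v0) w < m := by
    have := rk_lt_card hT hw
    rwa [card_inS hn hT hreg v0] at this
  have hbeats := card_X_beats hn hT hreg hw
  constructor
  · intro h
    have hsub : ((outS r v0).filter fun u' => rk r (outS r v0) u ≤ rk r (outS r v0) u')
        ⊆ (outS r v0).filter fun u' => r u' w := by
      intro u' hu'
      rw [Finset.mem_filter] at hu' ⊢
      refine ⟨hu'.1, ?_⟩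
      rcases eq_or_lt_of_le hu'.2 with he | hlt
      · have : u = u' := rk_injOn hT htX hu hu'.1 he
        exact this ▸ h
      · exact upward hn hT hreg houtset hu hu'.1 hw h ((rk_lt_iff hT htX hu hu'.1).mpr hlt)
    have hcard := Finset.card_le_card hsub
    rw [card_rk_ge hT htX (rk r (outS r v0) u), hXc, hbeats] at hcard
    omega
  · intro h
    by_contra hc
    have hsub : ((outS r v0).filter fun u' => r u' w)
        ⊆ (outS r v0).filter fun u' => rk r (outS r v0) u + 1 ≤ rk r (outS r v0) u' := by
      intro u' hu'
      rw [Finset.mem_filter] at hu' ⊢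
      refine ⟨hu'.1, ?_⟩
      have hne : u' ≠ u := fun he => hc (he ▸ hu'.2)
      have hne2 : rk r (outS r v0) u' ≠ rk r (outS r v0) u :=
        fun he => hne (rk_injOn hT htX hu'.1 hu he)
      by_contra hle
      have hlt : rk r (outS r v0) u' < rk r (outS r v0) u := by omega
      exact hc (upward hn hT hreg houtset hu'.1 hu hw hu'.2
        ((rk_lt_iff hT htX hu'.1 hu).mpr hlt))
    have hcard := Finset.card_le_card hsub
    rw [card_rk_ge hT htX (rk r (outS r v0) u + 1), hXc, hbeats] at hcard
    omega


open Classical in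
noncomputable def lbl (r : Fin n → Fin n → Prop) (v0 : Fin n) (m : ℕ) (u : Fin n) : ℕ :=
  if u = v0 then 0 else if r v0 u then rk r (outS r v0) u + 1 else m + 1 + rk r (inS r v0) u

lemma tri (hT : IsTournament r) (v0 u : Fin n) :
    u = v0 ∨ u ∈ outS r v0 ∨ u ∈ inS r v0 := by
  by_cases h : u = v0
  · exact Or.inl h
  · rcases total' hT (fun he : v0 = u => h he.symm) with h1 | h1
    · exact Or.inr (Or.inl (mem_outS.mpr h1))
    · exact Or.inr (Or.inr (mem_inS.mpr h1))

lemma lbl_v0 {v0 : Fin n} : lbl r v0 m v0 = 0 := by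
  rw [lbl, if_pos rfl]

lemma lbl_X (hT : IsTournament r) {v0 u : Fin n} (hu : u ∈ outS r v0) :
    lbl r v0 m u = rk r (outS r v0) u + 1 := by
  have h0 : r v0 u := mem_outS.mp hu
  have h1 : u ≠ v0 := fun he => hT.1 v0 (he ▸ h0)
  rw [lbl, if_neg h1, if_pos h0]

lemma lbl_Y (hT : IsTournament r) {v0 w : Fin n} (hw : w ∈ inS r v0) :
    lbl r v0 m w = m + 1 + rk r (inS r v0) w := by
  have h0 : r w v0 := mem_inS.mp hw
  have h1 : w ≠ v0 := fun he => hT.1 v0 (he ▸ h0)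
  rw [lbl, if_neg h1, if_neg (fun hc => asymm' hT hc h0)]

lemma lbl_inj (hn : n = 2 * m + 1) (hT : IsTournament r) (hreg : ∀ v, score r v = m)
    (houtset : ∀ v x y z : Fin n, r v x → r v y → r v z → r x y → r y z → r x z)
    (v0 : Fin n) {a b : Fin n} (h : lbl r v0 m a = lbl r v0 m b) : a = b := by
  have htX := trans_outS houtset v0
  have htY := trans_inS hn hT hreg houtset v0
  have hXc : (outS r v0).card = m := card_outS hreg v0
  have hYc : (inS r v0).card = m := card_inS hn hT hreg v0
  rcases tri hT v0 a with ha | ha | ha <;> rcases tri hT v0 b with hb | hb | hb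
  · rw [ha, hb]
  · rw [ha] at h
    rw [lbl_v0, lbl_X hT hb] at h; exact absurd h (by omega)
  · rw [ha] at h
    have hb' := hYc ▸ rk_lt_card hT hb
    rw [lbl_v0, lbl_Y hT hb] at h; exact absurd h (by omega)
  · rw [hb] at h
    rw [lbl_v0, lbl_X hT ha] at h; exact absurd h (by omega)
  · rw [lbl_X hT ha, lbl_X hT hb] at h
    exact rk_injOn hT htX ha hb (by omega)
  · have ha' := hXc ▸ rk_lt_card hT ha
    rw [lbl_X hT ha, lbl_Y hT hb] at h; exact absurd h (by omega)
  · rw [hb] at h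
    have ha' := hYc ▸ rk_lt_card hT ha
    rw [lbl_Y hT ha, lbl_v0] at h; exact absurd h (by omega)
  · have hb' := hXc ▸ rk_lt_card hT hb
    rw [lbl_Y hT ha, lbl_X hT hb] at h; exact absurd h (by omega)
  · rw [lbl_Y hT ha, lbl_Y hT hb] at h
    exact rk_injOn hT htY ha hb (by omega)

lemma master (hn : n = 2 * m + 1) (hT : IsTournament r) (hreg : ∀ v, score r v = m)
    (houtset : ∀ v x y z : Fin n, r v x → r v y → r v z → r x y → r y z → r x z)
    (v0 u w : Fin n) :
    r u w ↔ (if lbl r v0 m u ≤ lbl r v0 m w then lbl r v0 m w - lbl r v0 m u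
      else lbl r v0 m w + (n - lbl r v0 m u)) ∈ Finset.Icc 1 m := by
  have htX := trans_outS houtset v0
  have htY := trans_inS hn hT hreg houtset v0
  have hXc : (outS r v0).card = m := card_outS hreg v0
  have hYc : (inS r v0).card = m := card_inS hn hT hreg v0
  rw [Finset.mem_Icc]
  rcases tri hT v0 u with hu | hu | hu <;> rcases tri hT v0 w with hw | hw | hw
  · rw [hu, hw, lbl_v0]
    exact iff_of_false (hT.1 v0) (by split_ifs <;> omega)
  · have hw' := hXc ▸ rk_lt_card hT hw
    rw [hu, lbl_v0, lbl_X hT hw]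
    exact iff_of_true (mem_outS.mp hw) (by split_ifs <;> omega)
  · have hw' := hYc ▸ rk_lt_card hT hw
    rw [hu, lbl_v0, lbl_Y hT hw]
    exact iff_of_false (fun hc => asymm' hT hc (mem_inS.mp hw)) (by split_ifs <;> omega)
  · have hu' := hXc ▸ rk_lt_card hT hu
    rw [hw, lbl_v0, lbl_X hT hu]
    exact iff_of_false (asymm' hT (mem_outS.mp hu)) (by split_ifs <;> omega)
  · have hu' := hXc ▸ rk_lt_card hT hu
    have hw' := hXc ▸ rk_lt_card hT hw
    rw [rk_lt_iff hT htX hu hw, lbl_X hT hu, lbl_X hT hw]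
    split_ifs <;> omega
  · have hu' := hXc ▸ rk_lt_card hT hu
    have hw' := hYc ▸ rk_lt_card hT hw
    rw [F4 hn hT hreg houtset hu hw, lbl_X hT hu, lbl_Y hT hw]
    split_ifs <;> omega
  · have hu' := hYc ▸ rk_lt_card hT hu
    rw [hw, lbl_v0, lbl_Y hT hu]
    exact iff_of_true (mem_inS.mp hu) (by split_ifs <;> omega)
  · have hu' := hYc ▸ rk_lt_card hT hu
    have hw' := hXc ▸ rk_lt_card hT hw
    have hne : u ≠ w := fun he => asymm' hT (mem_inS.mp hu) (he ▸ mem_outS.mp hw)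
    have h8 : r w u ↔ rk r (inS r v0) u ≤ rk r (outS r v0) w :=
      F4 hn hT hreg houtset hw hu
    rw [hT.2 u w hne, h8, lbl_Y hT hu, lbl_X hT hw]
    split_ifs <;> omega
  · have hu' := hYc ▸ rk_lt_card hT hu
    have hw' := hYc ▸ rk_lt_card hT hw
    rw [rk_lt_iff hT htY hu hw, lbl_Y hT hu, lbl_Y hT hw]
    split_ifs <;> omega

lemma val_sub_helper {N A B : ℕ} [NeZero N] (hA : A < N) (hB : B < N) :
    ((B : ZMod N) - (A : ZMod N)).val = if A ≤ B then B - A else B + (N - A) := by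
  have hcast : ((B : ZMod N) - (A : ZMod N))
      = (((if A ≤ B then B - A else B + (N - A)) : ℕ) : ZMod N) := by
    split_ifs with h
    · rw [Nat.cast_sub h]
    · rw [Nat.cast_add, Nat.cast_sub hA.le, ZMod.natCast_self]
      ring
  rw [hcast, ZMod.val_natCast_of_lt (by split_ifs <;> omega)]

end Main

end Stmt15

theorem stmt15 {n m : ℕ} (hn : n = 2 * m + 1)
    (r : Fin n → Fin n → Prop) (hT : IsTournament r)
    (hreg : ∀ v : Fin n, score r v = m)
    (houtset : ∀ v x y z : Fin n,
      r v x → r v y → r v z → r x y → r y z → r x z) :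
    ∃ e : Fin n ≃ ZMod n, ∀ x y : Fin n,
      r x y ↔ (e y - e x).val ∈ Finset.Icc 1 m := by
  haveI : NeZero n := ⟨by omega⟩
  have hn0 : 0 < n := by omega
  set v0 : Fin n := ⟨0, hn0⟩ with hv0def
  have hlt : ∀ u : Fin n, Stmt15.lbl r v0 m u < n := by
    intro u
    rcases Stmt15.tri hT v0 u with hu | hu | hu
    · rw [hu, Stmt15.lbl_v0]; omega
    · have h1 := Stmt15.rk_lt_card hT hu
      rw [Stmt15.card_outS hreg v0] at h1
      rw [Stmt15.lbl_X hT hu]; omega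
    · have h1 := Stmt15.rk_lt_card hT hu
      rw [Stmt15.card_inS hn hT hreg v0] at h1
      rw [Stmt15.lbl_Y hT hu]; omega
  have hinj : Function.Injective fun u : Fin n => ((Stmt15.lbl r v0 m u : ℕ) : ZMod n) := by
    intro a b hab
    simp only at hab
    have h1 : Stmt15.lbl r v0 m a = Stmt15.lbl r v0 m b := by
      have h2 := congrArg ZMod.val hab
      rwa [ZMod.val_natCast_of_lt (hlt a), ZMod.val_natCast_of_lt (hlt b)] at h2
    exact Stmt15.lbl_inj hn hT hreg houtset v0 h1
  have hbij : Function.Bijective fun u : Fin n => ((Stmt15.lbl r v0 m u : ℕ) : ZMod n) :=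
    (Fintype.bijective_iff_injective_and_card _).mpr
      ⟨hinj, by rw [Fintype.card_fin, ZMod.card]⟩
  refine ⟨Equiv.ofBijective _ hbij, fun x y => ?_⟩
  have hval : ((Equiv.ofBijective _ hbij) y - (Equiv.ofBijective _ hbij) x).val
      = if Stmt15.lbl r v0 m x ≤ Stmt15.lbl r v0 m y
        then Stmt15.lbl r v0 m y - Stmt15.lbl r v0 m x
        else Stmt15.lbl r v0 m y + (n - Stmt15.lbl r v0 m x) :=
    Stmt15.val_sub_helper (hlt x) (hlt y)
  rw [Stmt15.master hn hT hreg houtset v0 x y, hval]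
end
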